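/- Let X ⊂ ℝ² be finite, α > 1, and let s_2* minimise P_2(s,X) = Σ‖s-x‖² + max‖s-x‖². If s_2* is equidistant from all points of X, then s_2* also minimises P_α(s,X) = Σ‖s-x‖^α + max‖s-x‖^α; that is, s_α* = s_2*. -/

import Mathlib

/-!
Let `r` be the common distance from `s` to the points. Moving `s` to `s + ε • u` raises `P₂` by
`2ε (⟪∑ (s - xᵢ), u⟫ + maxᵢ ⟪s - xᵢ, u⟫) + O(ε²)`, because every point attains the maximum; so
minimality makes this first variation nonnegative. Combined with the Cauchy–Schwarz bound
`⟪s - xᵢ, t - xᵢ⟫ ≤ r ‖t - xᵢ‖`, it shows that `s` also minimises `P₁`. Finally the tangent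
line `r ^ α + α r ^ (α - 1) (y - r) ≤ y ^ α` of the convex map `y ↦ y ^ α` at `r` turns
`P₁ t ≥ P₁ s` into `P_α t ≥ P_α s`.
-/

open Finset Filter Topology

open scoped RealInnerProductSpace

theorem Real.rpow_add_mul_rpow_sub_one_mul_sub_le {r y α : ℝ} (hr : 0 < r) (hy : 0 ≤ y)
    (hα : 1 ≤ α) : r ^ α + α * r ^ (α - 1) * (y - r) ≤ y ^ α := by
  have hbern := one_add_mul_self_le_rpow_one_add (s := y / r - 1)
    (by linarith [div_nonneg hy hr.le]) hα
  rw [add_sub_cancel, Real.div_rpow hy hr.le, le_div_iff₀ (by positivity)] at hbern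
  have : r ^ α + α * r ^ (α - 1) * (y - r) = (1 + α * (y / r - 1)) * r ^ α := by
    rw [Real.rpow_sub_one hr.ne']
    field_simp
  linarith

theorem nonneg_of_forall_pos_mul_add_sq_mul_nonneg {a c : ℝ}
    (h : ∀ ε > 0, 0 ≤ ε * a + ε ^ 2 * c) : 0 ≤ a := by
  have hlim : Tendsto (fun ε => a + ε * c) (𝓝[>] 0) (𝓝 a) :=
    ((continuous_const.add (continuous_id.mul continuous_const)).tendsto' 0 a
      (by simp)).mono_left nhdsWithin_le_nhds
  refine ge_of_tendsto hlim (eventually_nhdsWithin_of_forall fun ε (hε : 0 < ε) => ?_)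
  have : 0 ≤ ε * (a + ε * c) := by linarith [h ε hε]
  exact (mul_nonneg_iff_of_pos_left hε).mp this

theorem norm_add_smul_sub_sq {E : Type*} [NormedAddCommGroup E] [InnerProductSpace ℝ E]
    (s y u : E) (ε : ℝ) :
    ‖s + ε • u - y‖ ^ 2 = ‖s - y‖ ^ 2 + 2 * ε * ⟪s - y, u⟫ + ε ^ 2 * ‖u‖ ^ 2 := by
  rw [add_sub_right_comm, norm_add_sq_real, real_inner_smul_right, norm_smul, mul_pow,
    Real.norm_eq_abs, sq_abs]
  ring

section MinPower

variable {E : Type*} [NormedAddCommGroup E] {ι : Type*} [Fintype ι] [Nonempty ι]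

/-- The paper's `P_α(s, X)`, with `X` the range of `x`. -/
noncomputable def minPower (α : ℝ) (x : ι → E) (s : E) : ℝ :=
  ∑ i, ‖s - x i‖ ^ α + univ.sup' univ_nonempty fun i => ‖s - x i‖ ^ α

variable {x : ι → E} {s : E} {r : ℝ}

theorem minPower_nonneg (α : ℝ) (x : ι → E) (s : E) : 0 ≤ minPower α x s := by
  obtain ⟨i⟩ := ‹Nonempty ι›
  have hle := le_sup' (fun i => ‖s - x i‖ ^ α) (mem_univ i)
  exact add_nonneg (sum_nonneg fun i _ => by positivity)
    ((Real.rpow_nonneg (norm_nonneg _) α).trans hle)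

theorem minPower_eq_of_forall_norm_sub_eq (α : ℝ) (hr : ∀ i, ‖s - x i‖ = r) :
    minPower α x s = (Fintype.card ι + 1) * r ^ α := by
  simp only [minPower, hr, sum_const, sup'_const, card_univ, nsmul_eq_mul]
  ring

theorem minPower_le_of_forall_minPower_one_le (hs : ∀ t, minPower 1 x s ≤ minPower 1 x t)
    (hr : ∀ i, ‖s - x i‖ = r) {α : ℝ} (hα : 1 ≤ α) (t : E) :
    minPower α x s ≤ minPower α x t := by
  have hr₀ : 0 ≤ r := hr (Classical.arbitrary ι) ▸ norm_nonneg _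
  rw [minPower_eq_of_forall_norm_sub_eq α hr]
  rcases hr₀.eq_or_lt with rfl | hr_pos
  · rw [Real.zero_rpow (by positivity), mul_zero]
    exact minPower_nonneg α x t
  have h₁ := hs t
  rw [minPower_eq_of_forall_norm_sub_eq 1 hr] at h₁
  simp only [minPower, Real.rpow_one] at h₁ ⊢
  obtain ⟨j, -, hj⟩ := exists_mem_eq_sup' univ_nonempty fun i => ‖t - x i‖
  rw [hj] at h₁
  set c := α * r ^ (α - 1)
  have hc : 0 ≤ c := by positivity
  have htan (y : ℝ) (hy : 0 ≤ y) : r ^ α + c * (y - r) ≤ y ^ α :=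
    Real.rpow_add_mul_rpow_sub_one_mul_sub_le hr_pos hy hα
  have hsum : ∑ i, (r ^ α + c * (‖t - x i‖ - r)) ≤ ∑ i, ‖t - x i‖ ^ α :=
    sum_le_sum fun i _ => htan _ (norm_nonneg _)
  have hsup : ‖t - x j‖ ^ α ≤ univ.sup' univ_nonempty fun i => ‖t - x i‖ ^ α :=
    le_sup' (fun i => ‖t - x i‖ ^ α) (mem_univ j)
  simp only [sum_add_distrib, sum_const, card_univ, nsmul_eq_mul, ← mul_sum,
    sum_sub_distrib] at hsum
  nlinarith [htan _ (norm_nonneg (t - x j)), mul_le_mul_of_nonneg_left h₁ hc]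

variable [InnerProductSpace ℝ E]

theorem minPower_two_add_smul_le (hr : ∀ i, ‖s - x i‖ = r) (u : E) {ε : ℝ} (hε : 0 ≤ ε) :
    minPower 2 x (s + ε • u) ≤ minPower 2 x s +
      2 * ε * (⟪∑ i, (s - x i), u⟫ + univ.sup' univ_nonempty fun i => ⟪s - x i, u⟫) +
      (Fintype.card ι + 1) * ε ^ 2 * ‖u‖ ^ 2 := by
  rw [minPower_eq_of_forall_norm_sub_eq 2 hr]
  simp only [minPower, Real.rpow_two, norm_add_smul_sub_sq, hr]
  have hsum : ∑ i, (r ^ 2 + 2 * ε * ⟪s - x i, u⟫ + ε ^ 2 * ‖u‖ ^ 2) =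
      Fintype.card ι * r ^ 2 + 2 * ε * ⟪∑ i, (s - x i), u⟫ +
        Fintype.card ι * (ε ^ 2 * ‖u‖ ^ 2) := by
    simp only [sum_add_distrib, sum_const, card_univ, nsmul_eq_mul, sum_inner, mul_sum]
  have hsup : (univ.sup' univ_nonempty fun i => r ^ 2 + 2 * ε * ⟪s - x i, u⟫ + ε ^ 2 * ‖u‖ ^ 2)
      ≤ r ^ 2 + 2 * ε * (univ.sup' univ_nonempty fun i => ⟪s - x i, u⟫) + ε ^ 2 * ‖u‖ ^ 2 :=
    sup'_le _ _ fun i _ => by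
      gcongr
      exact le_sup' (fun i => ⟪s - x i, u⟫) (mem_univ i)
  linarith

theorem inner_sum_add_sup'_inner_nonneg (hs : ∀ t, minPower 2 x s ≤ minPower 2 x t)
    (hr : ∀ i, ‖s - x i‖ = r) (u : E) :
    0 ≤ ⟪∑ i, (s - x i), u⟫ + univ.sup' univ_nonempty fun i => ⟪s - x i, u⟫ := by
  suffices h : 0 ≤ 2 * (⟪∑ i, (s - x i), u⟫ + univ.sup' univ_nonempty fun i => ⟪s - x i, u⟫) by
    linarith
  refine nonneg_of_forall_pos_mul_add_sq_mul_nonneg (c := (Fintype.card ι + 1) * ‖u‖ ^ 2)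
    fun ε hε => ?_
  linarith [hs (s + ε • u), minPower_two_add_smul_le hr u hε.le]

theorem minPower_one_le_of_forall_minPower_two_le (hs : ∀ t, minPower 2 x s ≤ minPower 2 x t)
    (hr : ∀ i, ‖s - x i‖ = r) (t : E) : minPower 1 x s ≤ minPower 1 x t := by
  have hr₀ : 0 ≤ r := hr (Classical.arbitrary ι) ▸ norm_nonneg _
  rw [minPower_eq_of_forall_norm_sub_eq 1 hr, Real.rpow_one]
  rcases hr₀.eq_or_lt with rfl | hr_pos
  · simpa using minPower_nonneg 1 x t
  set M := univ.sup' univ_nonempty fun i => ‖t - x i‖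
  have hcs (i : ι) : ⟪s - x i, t - s⟫ + r ^ 2 ≤ ‖t - x i‖ * r := by
    have hsplit : ⟪s - x i, t - x i⟫ = ⟪s - x i, t - s⟫ + r ^ 2 := by
      rw [← sub_add_sub_cancel t s (x i), inner_add_right, real_inner_self_eq_norm_sq, hr i]
    have := real_inner_le_norm (s - x i) (t - x i)
    rw [hr i] at this
    linarith
  have hsum : ⟪∑ i, (s - x i), t - s⟫ + Fintype.card ι * r ^ 2 ≤ (∑ i, ‖t - x i‖) * r := by
    have := sum_le_sum fun i (_ : i ∈ univ) => hcs i
    simpa only [sum_add_distrib, sum_const, card_univ, nsmul_eq_mul, sum_inner, sum_mul]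
      using this
  have hsup : (univ.sup' univ_nonempty fun i => ⟪s - x i, t - s⟫) + r ^ 2 ≤ M * r := by
    have := sup'_le univ_nonempty (fun i => ⟪s - x i, t - s⟫) (a := M * r - r ^ 2)
      fun i _ => by
        linarith [hcs i, mul_le_mul_of_nonneg_right
          (le_sup' (fun i => ‖t - x i‖) (mem_univ i)) hr_pos.le]
    linarith
  have hfo := inner_sum_add_sup'_inner_nonneg hs hr (t - s)
  have : (Fintype.card ι + 1) * r * r ≤ (∑ i, ‖t - x i‖ + M) * r := by linarith
  simp only [minPower, Real.rpow_one]
  exact le_of_mul_le_mul_right this hr_pos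

end MinPower

/-- If the quadratic min-power centre `s₂*` is equidistant from all points of `X`, then it
also minimises the α-min-power objective for every α > 1. -/
theorem quadratic_centre_equidistant_implies_alpha_centre
    {n : ℕ} [NeZero n] (x : Fin n → EuclideanSpace ℝ (Fin 2)) (α : ℝ) (hα : 1 < α)
    (P₂ Pα : EuclideanSpace ℝ (Fin 2) → ℝ)
    (hP₂ : ∀ s, P₂ s = (∑ i, ‖s - x i‖ ^ 2) +
      Finset.univ.sup' Finset.univ_nonempty (fun i => ‖s - x i‖ ^ 2))
    (hPα : ∀ s, Pα s = (∑ i, ‖s - x i‖ ^ α) +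
      Finset.univ.sup' Finset.univ_nonempty (fun i => ‖s - x i‖ ^ α))
    (s₂ : EuclideanSpace ℝ (Fin 2)) (hs₂ : ∀ t, P₂ s₂ ≤ P₂ t)
    (heq : ∀ i j, ‖s₂ - x i‖ = ‖s₂ - x j‖) :
    ∀ t, Pα s₂ ≤ Pα t := by
  have hP₂' (s : EuclideanSpace ℝ (Fin 2)) : P₂ s = minPower 2 x s := by
    simp only [hP₂, minPower, Real.rpow_two]
  have hr (i : Fin n) : ‖s₂ - x i‖ = ‖s₂ - x 0‖ := heq i 0
  have h₁ := minPower_one_le_of_forall_minPower_two_le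
    (fun t => by simpa only [hP₂'] using hs₂ t) hr
  intro t
  rw [hPα, hPα]
  exact minPower_le_of_forall_minPower_one_le h₁ hr hα.le t
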